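/- arXiv:2308.08178 — 10 statements merged into one kernel-verified Lean document; each statement's English description precedes it below -/
import Mathlib

section
/- Let B : ℝ → ℝ³ be a differentiable curve with B(s) ≠ 0 and η(B(s),B(s)) = 0 for every s. Then there exists a unique function β : ℝ → ℝ such that B(s) × B′(s) = −β(s)·B(s) for all s; moreover this function satisfies η(B′(s),B′(s)) = β(s)² for all s. -/
/-- The Minkowski bilinear form on `ℝ³`. -/
def eta (x y : Fin 3 → ℝ) : ℝ := -(x 0 * y 0) + x 1 * y 1 + x 2 * y 2

/-- The Lorentzian cross product on `ℝ³`, determined by `η(x × y, z) = det(x, y, z)`. -/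
def lcross (x y : Fin 3 → ℝ) : Fin 3 → ℝ :=
  ![-(x 1 * y 2 - x 2 * y 1), x 2 * y 0 - x 0 * y 2, x 0 * y 1 - x 1 * y 0]

lemma key (x y : Fin 3 → ℝ) (hx : x ≠ 0) (hnull : eta x x = 0) (horth : eta x y = 0) :
    ∃ c : ℝ, lcross x y = (-c) • x ∧ eta y y = c ^ 2 := by
  simp only [eta] at hnull horth
  have hx0 : x 0 ≠ 0 := by
    intro h
    apply hx
    have h1 : x 1 = 0 ∧ x 2 = 0 := by
      constructor <;> nlinarith [sq_nonneg (x 1), sq_nonneg (x 2)]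
    funext i
    fin_cases i <;> simp [h, h1.1, h1.2]
  refine ⟨(x 1 * y 2 - x 2 * y 1) / x 0, ?_, ?_⟩
  · funext i
    fin_cases i <;> simp [lcross] <;> field_simp
    · ring
    · linear_combination (-(x 2)) * horth + y 2 * hnull
    · linear_combination (x 1) * horth - y 1 * hnull
  · simp only [eta]
    field_simp
    linear_combination (x 0 * y 0 + x 1 * y 1 + x 2 * y 2) * horth - (y 1 ^ 2 + y 2 ^ 2) * hnull

/-- For a differentiable curve `B` in the light cone (minus the origin), there is a unique
function `β` with `B × B′ = −β B`, and moreover `η(B′, B′) = β²`. -/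
theorem exists_unique_beta (B : ℝ → Fin 3 → ℝ) (hB : Differentiable ℝ B)
    (hBne : ∀ s, B s ≠ 0) (hBnull : ∀ s, eta (B s) (B s) = 0) :
    ∃! β : ℝ → ℝ, ∀ s,
      lcross (B s) (deriv B s) = (-(β s)) • B s ∧
      eta (deriv B s) (deriv B s) = (β s) ^ 2 := by
  have horth : ∀ s, eta (B s) (deriv B s) = 0 := by
    intro s
    have hBd : HasDerivAt B (deriv B s) s := (hB s).hasDerivAt
    have hcoord : ∀ i : Fin 3, HasDerivAt (fun t => B t i) (deriv B s i) s := fun i =>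
      ((ContinuousLinearMap.proj i : (Fin 3 → ℝ) →L[ℝ] ℝ).hasFDerivAt).comp_hasDerivAt s hBd
    have hf : HasDerivAt (fun t => eta (B t) (B t))
        (-(deriv B s 0 * B s 0 + B s 0 * deriv B s 0)
          + (deriv B s 1 * B s 1 + B s 1 * deriv B s 1)
          + (deriv B s 2 * B s 2 + B s 2 * deriv B s 2)) s := by
      simp only [eta]
      exact (((hcoord 0).mul (hcoord 0)).neg.add ((hcoord 1).mul (hcoord 1))).add
        ((hcoord 2).mul (hcoord 2))
    have hconst : HasDerivAt (fun t => eta (B t) (B t)) 0 s := by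
      have : (fun t => eta (B t) (B t)) = fun _ => (0 : ℝ) := funext hBnull
      rw [this]; exact hasDerivAt_const s 0
    have hD := hf.unique hconst
    simp only [eta]
    linear_combination (1 / 2) * hD
  choose c hc1 hc2 using fun s => key (B s) (deriv B s) (hBne s) (hBnull s) (horth s)
  refine ⟨c, fun s => ⟨hc1 s, hc2 s⟩, ?_⟩
  intro b hb
  funext s
  have h1 := (hb s).1
  have h2 := hc1 s
  rw [h1] at h2
  have := hBne s
  have : -(b s) = -(c s) := by
    by_contra hne
    exact (hBne s) (by
      have := sub_eq_zero.mpr h2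
      rw [← sub_smul] at this
      exact (smul_eq_zero.mp this).resolve_left (sub_ne_zero.mpr (fun h => hne h)) )
  linarith
end

section
/- Let b, c ∈ ℝ³ with b ≠ 0, η(b,b) = 0, and η(b,c) = 0. Then there exists a unique real number β such that b × c = −β·b, and moreover η(c,c) = β². -/
/-!
Since `b` is null, `b × (b × c) = η(b,c) b − η(b,b) c = 0`, so `b × c` is parallel to `b`;
as `b ≠ 0` forces `b₀ ≠ 0`, the factor is `β = −(b × c)₀ / b₀`. The value of `η(c,c)` comes
from the Gram determinant of `(b, c, e₀)`: it equals `−det(b, c, e₀)² = −(b × c)₀²` because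
`det η = −1`, and computing it from the Gram matrix gives `−b₀² η(c,c)` when `η(b,b) = η(b,c) = 0`.
-/

theorem lcross_lcross (x y z : Fin 3 → ℝ) :
    lcross x (lcross y z) = eta x y • z - eta x z • y := by
  ext i
  fin_cases i <;> simp [lcross, eta] <;> ring

theorem smul_eq_smul_of_lcross_eq_zero {x y : Fin 3 → ℝ} (h : lcross x y = 0) :
    x 0 • y = y 0 • x := by
  have h1 : x 2 * y 0 - x 0 * y 2 = 0 := congrFun h 1
  have h2 : x 0 * y 1 - x 1 * y 0 = 0 := congrFun h 2
  ext i
  fin_cases i <;> simp <;> linarith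

theorem lcross_apply_zero_sq (x y : Fin 3 → ℝ) :
    lcross x y 0 ^ 2 = x 0 ^ 2 * eta y y - 2 * x 0 * y 0 * eta x y + y 0 ^ 2 * eta x x
      + eta x x * eta y y - eta x y ^ 2 := by
  simp only [lcross, eta, Matrix.cons_val_zero]
  ring

theorem apply_zero_ne_zero_of_eta_self_eq_zero {b : Fin 3 → ℝ} (hb : b ≠ 0)
    (hbb : eta b b = 0) : b 0 ≠ 0 := by
  intro h0
  simp only [eta, h0] at hbb
  have h1 : b 1 = 0 := by nlinarith [sq_nonneg (b 1), sq_nonneg (b 2)]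
  have h2 : b 2 = 0 := by nlinarith [sq_nonneg (b 1), sq_nonneg (b 2)]
  exact hb (funext fun i => by fin_cases i <;> assumption)

/-- If `b ≠ 0` is null and `η(b, c) = 0`, then there is a unique real `β` with
`b × c = −β b`, and moreover `η(c, c) = β²`. -/
theorem exists_unique_beta_pointwise (b c : Fin 3 → ℝ) (hb : b ≠ 0)
    (hbnull : eta b b = 0) (hbc : eta b c = 0) :
    ∃! β : ℝ, lcross b c = (-β) • b ∧ eta c c = β ^ 2 := by
  have hb0 := apply_zero_ne_zero_of_eta_self_eq_zero hb hbnull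
  have hparallel : b 0 • lcross b c = lcross b c 0 • b :=
    smul_eq_smul_of_lcross_eq_zero (by simp [lcross_lcross, hbnull, hbc])
  have hgram : lcross b c 0 ^ 2 = b 0 ^ 2 * eta c c := by
    simp [lcross_apply_zero_sq, hbnull, hbc]
  have hcross : lcross b c = (lcross b c 0 / b 0) • b := by
    rw [div_eq_inv_mul, mul_smul, ← hparallel, inv_smul_smul₀ hb0]
  refine ⟨-(lcross b c 0 / b 0), ⟨by rwa [neg_neg], ?_⟩, ?_⟩
  · rw [neg_sq, div_pow, hgram, mul_div_cancel_left₀ _ (pow_ne_zero 2 hb0)]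
  · rintro β ⟨hβ, -⟩
    linarith [smul_left_injective ℝ hb (hβ.symm.trans hcross)]
end

section
/- Let A, B, C : ℝ → ℝ³ be differentiable maps such that for every s the triple (A(s), B(s), C(s)) satisfies the null-frame pairing conditions. Then there exist functions k₀, k₁, k₂ : ℝ → ℝ such that for all s: A′(s) = k₀(s)A(s) + k₁(s)C(s), B′(s) = −k₀(s)B(s) + k₂(s)C(s), and C′(s) = −k₂(s)A(s) − k₁(s)B(s). -/
/-- The null-frame pairing conditions for a triple of vectors in `ℝ³`. -/
def NullFrame (A B C : Fin 3 → ℝ) : Prop :=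
  eta A B = 1 ∧ eta C C = 1 ∧
  eta A A = 0 ∧ eta B B = 0 ∧ eta A C = 0 ∧ eta B C = 0

lemma eta_comm (x y : Fin 3 → ℝ) : eta x y = eta y x := by simp [eta]; ring

lemma eta_add_left (x y z : Fin 3 → ℝ) : eta (x + y) z = eta x z + eta y z := by
  simp [eta]; ring

lemma eta_smul_left (a : ℝ) (x z : Fin 3 → ℝ) : eta (a • x) z = a * eta x z := by
  simp [eta]; ring

lemma eta_zero_left (z : Fin 3 → ℝ) : eta 0 z = 0 := by simp [eta]

lemma decomp (A B C : Fin 3 → ℝ) (h : NullFrame A B C) (v : Fin 3 → ℝ) :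
    v = eta v B • A + eta v A • B + eta v C • C := by
  obtain ⟨hAB, hCC, hAA, hBB, hAC, hBC⟩ := h
  have hli : LinearIndependent ℝ ![A, B, C] := by
    rw [Fintype.linearIndependent_iff]
    intro g hg
    have h0 := congrFun hg
    simp [Fin.sum_univ_three] at h0
    have e : ∀ X : Fin 3 → ℝ, eta (g 0 • A + g 1 • B + g 2 • C) X = 0 := by
      intro X
      have : (g 0 • A + g 1 • B + g 2 • C : Fin 3 → ℝ) = 0 := funext h0
      rw [this, eta_zero_left]
    have e1 := e B; have e2 := e A; have e3 := e C
    rw [eta_add_left, eta_add_left, eta_smul_left, eta_smul_left, eta_smul_left] at e1 e2 e3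
    rw [hAB, hBB, eta_comm C B, hBC] at e1
    rw [hAA, eta_comm B A, hAB, eta_comm C A, hAC] at e2
    rw [hAC, hBC, hCC] at e3
    intro i
    fin_cases i <;> simp_all
  have hcard : Fintype.card (Fin 3) = Module.finrank ℝ (Fin 3 → ℝ) := by simp
  let b := basisOfLinearIndependentOfCardEqFinrank hli hcard
  have hb : ⇑b = ![A, B, C] := coe_basisOfLinearIndependentOfCardEqFinrank hli hcard
  have hspan : v ∈ Submodule.span ℝ (Set.range ![A, B, C]) := by
    rw [← hb, b.span_eq]; trivial
  induction hspan using Submodule.span_induction with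
  | mem x hx =>
    obtain ⟨i, rfl⟩ := hx
    fin_cases i
    · show A = eta A B • A + eta A A • B + eta A C • C
      rw [hAB, hAA, hAC]; simp
    · show B = eta B B • A + eta B A • B + eta B C • C
      rw [eta_comm B A, hAB, hBB, hBC]; simp
    · show C = eta C B • A + eta C A • B + eta C C • C
      rw [eta_comm C B, hBC, eta_comm C A, hAC, hCC]; simp
  | zero => simp [eta_zero_left]
  | add x y hx hy ihx ihy =>
    rw [eta_add_left, eta_add_left, eta_add_left]
    nth_rewrite 1 [ihx, ihy]
    module
  | smul a x hx ih =>
    rw [eta_smul_left, eta_smul_left, eta_smul_left]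
    nth_rewrite 1 [ih]
    module

lemma hasDerivAt_eta {f g : ℝ → Fin 3 → ℝ} {f' g' : Fin 3 → ℝ} {s : ℝ}
    (hf : HasDerivAt f f' s) (hg : HasDerivAt g g' s) :
    HasDerivAt (fun t => eta (f t) (g t)) (eta f' (g s) + eta (f s) g') s := by
  have hfi := hasDerivAt_pi.1 hf
  have hgi := hasDerivAt_pi.1 hg
  have h := (((hfi 0).mul (hgi 0)).neg.add ((hfi 1).mul (hgi 1))).add ((hfi 2).mul (hgi 2))
  convert h using 1
  · rfl
  · rfl
  · funext t; simp [eta]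
  simp [eta]; ring

lemma eta_deriv_eq_zero {f g : ℝ → Fin 3 → ℝ} (hf : Differentiable ℝ f)
    (hg : Differentiable ℝ g) (c : ℝ) (h : ∀ t, eta (f t) (g t) = c) (s : ℝ) :
    eta (deriv f s) (g s) + eta (f s) (deriv g s) = 0 := by
  have h1 : HasDerivAt (fun t => eta (f t) (g t))
      (eta (deriv f s) (g s) + eta (f s) (deriv g s)) s :=
    hasDerivAt_eta (hf s).hasDerivAt (hg s).hasDerivAt
  have h2 : (fun t => eta (f t) (g t)) = fun _ => c := funext h
  rw [h2] at h1
  exact h1.unique (hasDerivAt_const s c)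

/-- A differentiable family of null frames satisfies the null-frame ODE system for
some functions `k₀, k₁, k₂`. -/
theorem nullFrame_structure_equations (A B C : ℝ → Fin 3 → ℝ)
    (hA : Differentiable ℝ A) (hB : Differentiable ℝ B) (hC : Differentiable ℝ C)
    (hframe : ∀ s, NullFrame (A s) (B s) (C s)) :
    ∃ k₀ k₁ k₂ : ℝ → ℝ, ∀ s,
      deriv A s = k₀ s • A s + k₁ s • C s ∧
      deriv B s = (-(k₀ s)) • B s + k₂ s • C s ∧
      deriv C s = (-(k₂ s)) • A s + (-(k₁ s)) • B s := by
  refine ⟨fun s => eta (deriv A s) (B s), fun s => eta (deriv A s) (C s),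
    fun s => eta (deriv B s) (C s), fun s => ?_⟩
  obtain ⟨hAB, hCC, hAA, hBB, hAC, hBC⟩ := hframe s
  have eAA := eta_deriv_eq_zero hA hA 0 (fun t => (hframe t).2.2.1) s
  have eBB := eta_deriv_eq_zero hB hB 0 (fun t => (hframe t).2.2.2.1) s
  have eCC := eta_deriv_eq_zero hC hC 1 (fun t => (hframe t).2.1) s
  have eAB := eta_deriv_eq_zero hA hB 1 (fun t => (hframe t).1) s
  have eAC := eta_deriv_eq_zero hA hC 0 (fun t => (hframe t).2.2.2.2.1) s
  have eBC := eta_deriv_eq_zero hB hC 0 (fun t => (hframe t).2.2.2.2.2) s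
  rw [eta_comm (A s) (deriv A s)] at eAA
  rw [eta_comm (B s) (deriv B s)] at eBB
  rw [eta_comm (C s) (deriv C s)] at eCC
  -- derived pairings
  have hA'A : eta (deriv A s) (A s) = 0 := by linarith
  have hB'B : eta (deriv B s) (B s) = 0 := by linarith
  have hC'C : eta (deriv C s) (C s) = 0 := by linarith
  have hB'A : eta (deriv B s) (A s) = -(eta (deriv A s) (B s)) := by
    rw [eta_comm (deriv B s) (A s)]; linarith
  have hC'A : eta (deriv C s) (A s) = -(eta (deriv A s) (C s)) := by
    rw [eta_comm (deriv C s) (A s)]; linarith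
  have hC'B : eta (deriv C s) (B s) = -(eta (deriv B s) (C s)) := by
    rw [eta_comm (deriv C s) (B s)]; linarith
  refine ⟨?_, ?_, ?_⟩
  · have := decomp (A s) (B s) (C s) ⟨hAB, hCC, hAA, hBB, hAC, hBC⟩ (deriv A s)
    rw [hA'A] at this
    simpa using this
  · have := decomp (A s) (B s) (C s) ⟨hAB, hCC, hAA, hBB, hAC, hBC⟩ (deriv B s)
    rw [hB'B, hB'A] at this
    simpa using this
  · have := decomp (A s) (B s) (C s) ⟨hAB, hCC, hAA, hBB, hAC, hBC⟩ (deriv C s)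
    rw [hC'C, hC'A, hC'B] at this
    simpa using this
end

section
/- For any continuous functions k₁, k₂ : ℝ → ℝ there exist differentiable maps A, B, C : ℝ → ℝ³ satisfying A′(s) = k₁(s)C(s), B′(s) = k₂(s)C(s), C′(s) = −k₂(s)A(s) − k₁(s)B(s) for all s ∈ ℝ, with initial values A(0) = (−1/√2, 1/√2, 0), B(0) = (1/√2, 1/√2, 0), C(0) = (0,0,1), and such that the triple (A(s), B(s), C(s)) satisfies the null-frame pairing conditions for every s ∈ ℝ. -/
/-! The frame `X = (A, B, C)` solves the linear ODE `Xᵢ' = ∑ₖ aᵢₖ(s) Xₖ`, which has a global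
solution given by the Peano–Baker series: on `[-T, T]` its `n`-th term is bounded by
`‖x₀‖ (K T)ⁿ / n!`, so the series may be differentiated termwise.
The Gram matrix `G = (η(Xᵢ, Xⱼ))` then solves `G' = a G + G aᵀ`. Since `a(s) G₀ + G₀ a(s)ᵀ = 0`
for the Gram matrix `G₀` of a null frame, `G - G₀` solves the same homogeneous linear ODE with
zero initial value, so it vanishes by uniqueness. -/

open Set intervalIntegral MeasureTheory
open scoped Nat Interval

noncomputable section

section LinearODE

variable {E : Type*} [NormedAddCommGroup E] [NormedSpace ℝ E]

theorem norm_integral_le_mul_abs_pow_succ_div {f : ℝ → E} {c t : ℝ} {n : ℕ}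
    (hf : IntervalIntegrable f volume 0 t) (hbound : ∀ τ ∈ Ι 0 t, ‖f τ‖ ≤ c * |τ| ^ n) :
    ‖∫ τ in 0..t, f τ‖ ≤ c * |t| ^ (n + 1) / (n + 1) := by
  have hpow : IntegrableOn (fun τ : ℝ => c * |τ| ^ n) (Ι 0 t) :=
    ((continuous_const.mul (continuous_abs.pow n)).intervalIntegrable 0 t).def'
  calc ‖∫ τ in 0..t, f τ‖ ≤ ∫ τ in Ι 0 t, ‖f τ‖ := norm_integral_le_integral_norm_uIoc
    _ ≤ ∫ τ in Ι 0 t, c * |τ| ^ n :=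
      setIntegral_mono_on hf.def'.norm hpow measurableSet_uIoc hbound
    _ = c * |t| ^ (n + 1) / (n + 1) := by
      have h := integral_pow_abs_sub_uIoc (a := 0) (b := t) n
      simp only [sub_zero] at h
      rw [MeasureTheory.integral_const_mul, h, mul_div_assoc]

/-- The terms of the Peano–Baker series, whose sum solves `x' = L t x`, `x 0 = x₀`. -/
def peanoBakerTerm (L : ℝ → E →L[ℝ] E) (x₀ : E) : ℕ → ℝ → E
  | 0 => fun _ => x₀
  | n + 1 => fun t => ∫ τ in 0..t, L τ (peanoBakerTerm L x₀ n τ)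

variable {L : ℝ → E →L[ℝ] E}

theorem eq_zero_of_hasDerivAt_clm_apply (hL : Continuous L) {y : ℝ → E}
    (hy : ∀ t, HasDerivAt y (L t (y t)) t) (h0 : y 0 = 0) : y = 0 := by
  funext t
  set T := |t| + 1
  obtain ⟨K, hK⟩ := (isCompact_Icc (a := -T) (b := T)).bddAbove_image hL.nnnorm.continuousOn
  have hT : 0 < T := by positivity
  refine ODE_solution_unique_of_mem_Ioo (v := fun s => L s) (s := fun _ => univ) (K := K)
    (fun s hs =>
      ((L s).lipschitz.weaken (hK (mem_image_of_mem _ (Ioo_subset_Icc_self hs)))).lipschitzOnWith)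
    ⟨by linarith, hT⟩ (fun s _ => ⟨hy s, trivial⟩)
    (fun s _ => ⟨by simp, trivial⟩) h0
    ⟨by linarith [neg_abs_le t], by linarith [le_abs_self t]⟩

theorem continuous_peanoBakerTerm (hL : Continuous L) (x₀ : E) :
    ∀ n, Continuous (peanoBakerTerm L x₀ n)
  | 0 => continuous_const
  | n + 1 => continuous_primitive
      (fun _ _ => (hL.clm_apply (continuous_peanoBakerTerm hL x₀ n)).intervalIntegrable _ _) 0

theorem norm_peanoBakerTerm_le (hL : Continuous L) (x₀ : E) {T K : ℝ}
    (hK : ∀ τ ∈ Icc (-T) T, ‖L τ‖ ≤ K) (n : ℕ) {t : ℝ} (ht : t ∈ Icc (-T) T) :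
    ‖peanoBakerTerm L x₀ n t‖ ≤ ‖x₀‖ * ((K * |t|) ^ n / n !) := by
  induction n generalizing t with
  | zero => simp [peanoBakerTerm]
  | succ n ih =>
    have hK₀ : 0 ≤ K := (norm_nonneg _).trans (hK t ht)
    have hT : 0 ≤ T := by linarith [ht.1, ht.2]
    have hsub : Ι 0 t ⊆ Icc (-T) T :=
      uIoc_subset_uIcc.trans (uIcc_subset_Icc ⟨by linarith, hT⟩ ht)
    have hint := norm_integral_le_mul_abs_pow_succ_div (c := K * ‖x₀‖ * K ^ n / n !) (n := n)
      ((hL.clm_apply (continuous_peanoBakerTerm hL x₀ n)).intervalIntegrable 0 t)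
      fun τ hτ => calc
        ‖L τ (peanoBakerTerm L x₀ n τ)‖ ≤ ‖L τ‖ * ‖peanoBakerTerm L x₀ n τ‖ := (L τ).le_opNorm _
        _ ≤ K * (‖x₀‖ * ((K * |τ|) ^ n / n !)) :=
          mul_le_mul (hK τ (hsub hτ)) (ih (hsub hτ)) (norm_nonneg _) hK₀
        _ = K * ‖x₀‖ * K ^ n / n ! * |τ| ^ n := by ring
    refine hint.trans_eq ?_
    rw [Nat.factorial_succ]
    push_cast
    field_simp
    ring

variable [CompleteSpace E]

theorem hasDerivAt_peanoBakerTerm_succ (hL : Continuous L) (x₀ : E) (n : ℕ) (t : ℝ) :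
    HasDerivAt (peanoBakerTerm L x₀ (n + 1)) (L t (peanoBakerTerm L x₀ n t)) t :=
  ((hL.clm_apply (continuous_peanoBakerTerm hL x₀ n)).integral_hasStrictDerivAt 0 t).hasDerivAt

theorem summable_peanoBakerTerm (hL : Continuous L) (x₀ : E) (t : ℝ) :
    Summable fun n => peanoBakerTerm L x₀ n t := by
  obtain ⟨K, hK⟩ := (isCompact_Icc (a := -|t|) (b := |t|)).exists_bound_of_continuousOn
    hL.continuousOn
  exact ((Real.summable_pow_div_factorial (K * |t|)).mul_left ‖x₀‖).of_norm_bounded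
    fun n => norm_peanoBakerTerm_le hL x₀ hK n (abs_le.1 le_rfl)

theorem hasDerivAt_tsum_peanoBakerTerm_succ (hL : Continuous L) (x₀ : E) (t : ℝ) :
    HasDerivAt (fun s => ∑' n, peanoBakerTerm L x₀ (n + 1) s)
      (∑' n, L t (peanoBakerTerm L x₀ n t)) t := by
  set T := |t| + 1
  obtain ⟨K, hK⟩ := (isCompact_Icc (a := -T) (b := T)).exists_bound_of_continuousOn
    hL.continuousOn
  have hT : 0 < T := by positivity
  have hK₀ : 0 ≤ K := (norm_nonneg _).trans (hK 0 ⟨by linarith, hT.le⟩)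
  have hmem : t ∈ Ioo (-T) T := ⟨by linarith [neg_abs_le t], by linarith [le_abs_self t]⟩
  refine hasDerivAt_tsum_of_isPreconnected
    (((Real.summable_pow_div_factorial (K * T)).mul_left ‖x₀‖).mul_left K) isOpen_Ioo
    isPreconnected_Ioo (fun n y _ => hasDerivAt_peanoBakerTerm_succ hL x₀ n y) (fun n y hy => ?_)
    (y₀ := 0) ⟨by linarith, by linarith⟩ (by simp [peanoBakerTerm]) hmem
  have hy' := Ioo_subset_Icc_self hy
  calc ‖L y (peanoBakerTerm L x₀ n y)‖ ≤ ‖L y‖ * ‖peanoBakerTerm L x₀ n y‖ := (L y).le_opNorm _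
    _ ≤ K * (‖x₀‖ * ((K * |y|) ^ n / n !)) :=
      mul_le_mul (hK y hy') (norm_peanoBakerTerm_le hL x₀ hK n hy') (norm_nonneg _) hK₀
    _ ≤ K * (‖x₀‖ * ((K * T) ^ n / n !)) := by
      gcongr
      exact abs_le.2 hy'

theorem exists_hasDerivAt_clm_apply (hL : Continuous L) (x₀ : E) :
    ∃ x : ℝ → E, x 0 = x₀ ∧ ∀ t, HasDerivAt x (L t (x t)) t := by
  refine ⟨fun t => x₀ + ∑' n, peanoBakerTerm L x₀ (n + 1) t, by simp [peanoBakerTerm],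
    fun t => ?_⟩
  convert (hasDerivAt_tsum_peanoBakerTerm_succ hL x₀ t).const_add x₀ using 1
  rw [← (L t).map_tsum (summable_peanoBakerTerm hL x₀ t),
    (summable_peanoBakerTerm hL x₀ t).tsum_eq_zero_add]
  rfl

end LinearODE

section Frame

variable {ι : Type*} [Fintype ι] {E : Type*} [NormedAddCommGroup E] [NormedSpace ℝ E]

/-- Bundled linearly in `a`, so that `s ↦ frameGenerator (a s)` is continuous as soon as `a` is,
by finite-dimensionality. -/
def frameGenerator : (ι → ι → ℝ) →ₗ[ℝ] (ι → E) →L[ℝ] (ι → E) where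
  toFun a := ContinuousLinearMap.pi fun i => ∑ k, a i k • ContinuousLinearMap.proj k
  map_add' a b := by ext; simp [add_smul, Finset.sum_add_distrib]
  map_smul' c a := by ext; simp [mul_smul, Finset.smul_sum]

@[simp]
theorem frameGenerator_apply (a : ι → ι → ℝ) (X : ι → E) (i : ι) :
    frameGenerator a X i = ∑ k, a i k • X k := by
  simp [frameGenerator]

def gram (B : E →L[ℝ] E →L[ℝ] ℝ) (X : ι → E) : ι → ι → ℝ := fun i j => B (X i) (X j)

def gramGenerator : (ι → ι → ℝ) →ₗ[ℝ] (ι → ι → ℝ) →L[ℝ] (ι → ι → ℝ) where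
  toFun a := frameGenerator (E := ι → ℝ) a +
    ContinuousLinearMap.pi fun i => (frameGenerator (E := ℝ) a).comp (ContinuousLinearMap.proj i)
  map_add' a b := by ext; simp only [map_add]; simp; abel
  map_smul' c a := by ext; simp only [map_smul]; simp

theorem gramGenerator_apply (a G : ι → ι → ℝ) (i j : ι) :
    gramGenerator a G i j = ∑ k, (a i k * G k j + a j k * G i k) := by
  simp [gramGenerator, Finset.sum_add_distrib]

theorem hasDerivAt_gram (B : E →L[ℝ] E →L[ℝ] ℝ) {X : ℝ → ι → E} {a : ι → ι → ℝ} {s : ℝ}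
    (hX : HasDerivAt X (frameGenerator a (X s)) s) :
    HasDerivAt (fun s => gram B (X s)) (gramGenerator a (gram B (X s))) s := by
  have hXi : ∀ i, HasDerivAt (fun s => X s i) (∑ k, a i k • X s k) s := fun i => by
    simpa using hasDerivAt_pi.1 hX i
  refine hasDerivAt_pi.2 fun i => hasDerivAt_pi.2 fun j => ?_
  refine ((B.hasFDerivAt.comp_hasDerivAt s (hXi i)).clm_apply (hXi j)).congr_deriv ?_
  simp [gramGenerator_apply, gram, Finset.sum_add_distrib]

theorem gram_eq_of_hasDerivAt_frameGenerator (B : E →L[ℝ] E →L[ℝ] ℝ) {a : ℝ → ι → ι → ℝ}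
    (ha : Continuous a) {G₀ : ι → ι → ℝ} (hG₀ : ∀ s, gramGenerator (a s) G₀ = 0)
    {X : ℝ → ι → E} (hX : ∀ s, HasDerivAt X (frameGenerator (a s) (X s)) s)
    (h0 : gram B (X 0) = G₀) (s : ℝ) : gram B (X s) = G₀ := by
  have hD := eq_zero_of_hasDerivAt_clm_apply
    (gramGenerator.continuous_of_finiteDimensional.comp ha) (y := fun s => gram B (X s) - G₀)
    (fun s => by simpa [hG₀] using (hasDerivAt_gram B (hX s)).sub_const G₀)
    (sub_eq_zero.2 h0)
  exact sub_eq_zero.1 (congrFun hD s)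

end Frame

def etaCLM : (Fin 3 → ℝ) →L[ℝ] (Fin 3 → ℝ) →L[ℝ] ℝ :=
  LinearMap.toContinuousLinearMap <| LinearMap.toContinuousLinearMap.toLinearMap ∘ₗ
    LinearMap.mk₂ ℝ eta (fun _ _ _ => by simp only [eta, Pi.add_apply]; ring)
      (fun _ _ _ => by simp only [eta, Pi.smul_apply, smul_eq_mul]; ring)
      (fun _ _ _ => by simp only [eta, Pi.add_apply]; ring)
      (fun _ _ _ => by simp only [eta, Pi.smul_apply, smul_eq_mul]; ring)

@[simp]
theorem etaCLM_apply (x y : Fin 3 → ℝ) : etaCLM x y = eta x y := rfl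

def curvatureMatrix (k₁ k₂ : ℝ) : Fin 3 → Fin 3 → ℝ :=
  ![![0, 0, k₁], ![0, 0, k₂], ![-k₂, -k₁, 0] ]

def nullGram : Fin 3 → Fin 3 → ℝ :=
  ![![0, 1, 0], ![1, 0, 0], ![0, 0, 1] ]

theorem gramGenerator_curvatureMatrix_nullGram (k₁ k₂ : ℝ) :
    gramGenerator (curvatureMatrix k₁ k₂) nullGram = 0 := by
  ext i j
  fin_cases i <;> fin_cases j <;>
    simp [gramGenerator_apply, curvatureMatrix, nullGram, Fin.sum_univ_three]

theorem nullFrame_iff_gram_eq (X : Fin 3 → Fin 3 → ℝ) :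
    NullFrame (X 0) (X 1) (X 2) ↔ gram etaCLM X = nullGram := by
  have heta : ∀ x y, eta x y = eta y x := fun x y => by simp only [eta]; ring
  constructor
  · rintro ⟨hAB, hCC, hAA, hBB, hAC, hBC⟩
    ext i j
    fin_cases i <;> fin_cases j <;>
      simp [gram, nullGram, hAB, hCC, hAA, hBB, hAC, hBC, heta (X 1) (X 0), heta (X 2) (X 0),
        heta (X 2) (X 1)]
  · intro h
    have hG := fun i j => congrFun (congrFun h i) j
    simp only [gram, etaCLM_apply] at hG
    exact ⟨hG 0 1, hG 2 2, hG 0 0, hG 1 1, hG 0 2, hG 1 2⟩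

theorem nullFrame_standard :
    NullFrame ![-(1 / Real.sqrt 2), 1 / Real.sqrt 2, 0] ![1 / Real.sqrt 2, 1 / Real.sqrt 2, 0]
      ![0, 0, 1] := by
  have h : (Real.sqrt 2)⁻¹ * (Real.sqrt 2)⁻¹ = 1 / 2 := by
    rw [← mul_inv, Real.mul_self_sqrt zero_le_two, one_div]
  refine ⟨?_, ?_, ?_, ?_, ?_, ?_⟩ <;> simp [eta]
  linarith

/-- For any continuous curvature functions `k₁, k₂`, the null-frame ODE system has a
global solution with the standard initial frame, consisting of null frames. -/
theorem exists_nullFrame_with_curvatures (k₁ k₂ : ℝ → ℝ)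
    (hk₁ : Continuous k₁) (hk₂ : Continuous k₂) :
    ∃ A B C : ℝ → Fin 3 → ℝ,
      Differentiable ℝ A ∧ Differentiable ℝ B ∧ Differentiable ℝ C ∧
      (∀ s, deriv A s = k₁ s • C s) ∧
      (∀ s, deriv B s = k₂ s • C s) ∧
      (∀ s, deriv C s = (-(k₂ s)) • A s + (-(k₁ s)) • B s) ∧
      A 0 = ![-(1 / Real.sqrt 2), 1 / Real.sqrt 2, 0] ∧
      B 0 = ![1 / Real.sqrt 2, 1 / Real.sqrt 2, 0] ∧
      C 0 = ![0, 0, 1] ∧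
      ∀ s, NullFrame (A s) (B s) (C s) := by
  set a := fun s => curvatureMatrix (k₁ s) (k₂ s)
  have ha : Continuous a := by
    refine continuous_pi fun i => continuous_pi fun j => ?_
    fin_cases i <;> fin_cases j <;> simp [a, curvatureMatrix] <;> fun_prop
  obtain ⟨X, hX0, hX⟩ := exists_hasDerivAt_clm_apply
    ((frameGenerator (E := Fin 3 → ℝ)).continuous_of_finiteDimensional.comp ha)
    ![![-(1 / Real.sqrt 2), 1 / Real.sqrt 2, 0], ![1 / Real.sqrt 2, 1 / Real.sqrt 2, 0],
      ![0, 0, 1] ]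
  have hgram := gram_eq_of_hasDerivAt_frameGenerator etaCLM ha
    (fun s => gramGenerator_curvatureMatrix_nullGram _ _) hX
    ((nullFrame_iff_gram_eq _).1 (by simpa [hX0] using nullFrame_standard))
  have hrow : ∀ i s, HasDerivAt (fun s => X s i) (∑ k, a s i k • X s k) s := fun i s => by
    simpa using hasDerivAt_pi.1 (hX s) i
  refine ⟨fun s => X s 0, fun s => X s 1, fun s => X s 2,
    fun s => (hrow 0 s).differentiableAt, fun s => (hrow 1 s).differentiableAt,
    fun s => (hrow 2 s).differentiableAt, fun s => ?_, fun s => ?_, fun s => ?_,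
    by simp [hX0], by simp [hX0], by simp [hX0], fun s => (nullFrame_iff_gram_eq _).2 (hgram s)⟩
  all_goals
    rw [(hrow _ s).deriv]
    simp [a, curvatureMatrix, Fin.sum_univ_three]
end
end

section
/- Let B : ℝ → ℝ³ be a twice differentiable curve with B(s) ≠ 0, η(B(s),B(s)) = 0, and B(s) × B′(s) = (1/2)·B(s) for all s ∈ ℝ, and let b : ℝ → ℝ be an arbitrary function. Define A : ℝ → ℝ³ by A(s) = −4·(2·η(B″(s),B″(s))·B(s) + B″(s)) − 2·b(s)·(B′(s) + (b(s)/4)·B(s)). Then η(A(s),A(s)) = 0 and η(A(s),B(s)) = 1 for all s ∈ ℝ. -/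
/-- For a null curve `B` with `B × B′ = (1/2) B` and any function `b`, the vector field
`A = −4(2η(B″,B″)B + B″) − 2b(B′ + (b/4)B)` is null and satisfies `η(A, B) = 1`. -/
theorem velocity_from_ruling_is_null (B : ℝ → Fin 3 → ℝ)
    (hB : Differentiable ℝ B) (hB' : Differentiable ℝ (deriv B))
    (hBne : ∀ s, B s ≠ 0) (hBnull : ∀ s, eta (B s) (B s) = 0)
    (hcross : ∀ s, lcross (B s) (deriv B s) = (1 / 2 : ℝ) • B s)
    (b : ℝ → ℝ)
    (A : ℝ → Fin 3 → ℝ)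
    (hA : ∀ s, A s =
      (-4 : ℝ) • ((2 * eta (deriv (deriv B) s) (deriv (deriv B) s)) • B s
          + deriv (deriv B) s)
        - (2 * b s) • (deriv B s + (b s / 4) • B s)) :
    ∀ s, eta (A s) (A s) = 0 ∧ eta (A s) (B s) = 1 := by
  -- cross product equations, componentwise
  have hc : ∀ s, ∀ i : Fin 3, lcross (B s) (deriv B s) i = (1/2 : ℝ) * B s i := by
    intro s i
    have := congrFun (hcross s) i
    simpa using this
  have hxy : ∀ s, eta (B s) (deriv B s) = 0 := by
    intro s
    have e0 := hc s 0
    have e1 := hc s 1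
    have e2 := hc s 2
    simp only [lcross, Matrix.cons_val_zero, Matrix.cons_val_one, Matrix.head_cons,
      Matrix.cons_val_two, Matrix.tail_cons] at e0 e1 e2
    simp only [eta]
    linear_combination 2 * deriv B s 0 * e0 - 2 * deriv B s 1 * e1 - 2 * deriv B s 2 * e2
  have hyy : ∀ s, eta (deriv B s) (deriv B s) = 1/4 := by
    intro s
    have e0 := hc s 0
    have e1 := hc s 1
    have e2 := hc s 2
    simp only [lcross, Matrix.cons_val_zero, Matrix.cons_val_one, Matrix.head_cons,
      Matrix.cons_val_two, Matrix.tail_cons] at e0 e1 e2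
    have hxy' := hxy s
    simp only [eta] at hxy' ⊢
    obtain ⟨i, hi⟩ := Function.ne_iff.mp (hBne s)
    have hi' : B s i ≠ 0 := by simpa using hi
    have k0 : (-(deriv B s 0 * deriv B s 0) + deriv B s 1 * deriv B s 1
        + deriv B s 2 * deriv B s 2) * B s 0 = 1/4 * B s 0 := by
      linear_combination deriv B s 0 * hxy' + deriv B s 1 * e2 - deriv B s 2 * e1
        + (1/2) * e0
    have k1 : (-(deriv B s 0 * deriv B s 0) + deriv B s 1 * deriv B s 1
        + deriv B s 2 * deriv B s 2) * B s 1 = 1/4 * B s 1 := by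
      linear_combination deriv B s 1 * hxy' - deriv B s 2 * e0 + deriv B s 0 * e2
        + (1/2) * e1
    have k2 : (-(deriv B s 0 * deriv B s 0) + deriv B s 1 * deriv B s 1
        + deriv B s 2 * deriv B s 2) * B s 2 = 1/4 * B s 2 := by
      linear_combination deriv B s 2 * hxy' - deriv B s 0 * e1 + deriv B s 1 * e0
        + (1/2) * e2
    fin_cases i
    · exact mul_right_cancel₀ hi' k0
    · exact mul_right_cancel₀ hi' k1
    · exact mul_right_cancel₀ hi' k2
  -- component derivatives
  have hd1 : ∀ s (i : Fin 3), HasDerivAt (fun t => B t i) (deriv B s i) s := by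
    intro s i
    exact hasDerivAt_pi.mp (hB s).hasDerivAt i
  have hd2 : ∀ s (i : Fin 3), HasDerivAt (fun t => deriv B t i) (deriv (deriv B) s i) s := by
    intro s i
    exact hasDerivAt_pi.mp (hB' s).hasDerivAt i
  -- derivative of eta (B s) (deriv B s) = 0
  have hxz : ∀ s, eta (B s) (deriv (deriv B) s) = -(1/4) := by
    intro s
    have hP : HasDerivAt (fun t => eta (B t) (deriv B t))
        (eta (deriv B s) (deriv B s) + eta (B s) (deriv (deriv B) s)) s := by
      have h := ((((hd1 s 0).mul (hd2 s 0)).neg).add ((hd1 s 1).mul (hd2 s 1))).add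
        ((hd1 s 2).mul (hd2 s 2))
      exact h.congr_deriv (by simp only [eta]; ring)
    have hQ : HasDerivAt (fun t => eta (B t) (deriv B t)) 0 s := by
      have : (fun t => eta (B t) (deriv B t)) = fun _ => (0:ℝ) := funext hxy
      rw [this]; exact hasDerivAt_const s 0
    have h0 := hP.unique hQ
    have := hyy s
    linarith
  -- derivative of eta (deriv B s) (deriv B s) = 1/4
  have hyz : ∀ s, eta (deriv B s) (deriv (deriv B) s) = 0 := by
    intro s
    have hP : HasDerivAt (fun t => eta (deriv B t) (deriv B t))
        (2 * eta (deriv B s) (deriv (deriv B) s)) s := by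
      have h := ((((hd2 s 0).mul (hd2 s 0)).neg).add ((hd2 s 1).mul (hd2 s 1))).add
        ((hd2 s 2).mul (hd2 s 2))
      exact h.congr_deriv (by simp only [eta]; ring)
    have hQ : HasDerivAt (fun t => eta (deriv B t) (deriv B t)) 0 s := by
      have : (fun t => eta (deriv B t) (deriv B t)) = fun _ => (1/4 : ℝ) := funext hyy
      rw [this]; exact hasDerivAt_const s (1/4 : ℝ)
    have h0 := hP.unique hQ
    linarith
  intro s
  have hxx' := hBnull s
  have hxy' := hxy s
  have hyy' := hyy s
  have hxz' := hxz s
  have hyz' := hyz s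
  rw [hA s]
  simp only [eta, Pi.smul_apply, Pi.add_apply, Pi.sub_apply, smul_eq_mul] at hxx' hxy' hyy' hxz' hyz' ⊢
  constructor
  · linear_combination
      (-8 * (-(deriv (deriv B) s 0 * deriv (deriv B) s 0) + deriv (deriv B) s 1 * deriv (deriv B) s 1 + deriv (deriv B) s 2 * deriv (deriv B) s 2) - b s ^ 2 / 2)^2 * hxx'
      + 2 * (-8 * (-(deriv (deriv B) s 0 * deriv (deriv B) s 0) + deriv (deriv B) s 1 * deriv (deriv B) s 1 + deriv (deriv B) s 2 * deriv (deriv B) s 2) - b s ^ 2 / 2) * (-2 * b s) * hxy'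
      + (-2 * b s)^2 * hyy'
      + 2 * (-8 * (-(deriv (deriv B) s 0 * deriv (deriv B) s 0) + deriv (deriv B) s 1 * deriv (deriv B) s 1 + deriv (deriv B) s 2 * deriv (deriv B) s 2) - b s ^ 2 / 2) * (-4) * hxz'
      + 2 * (-2 * b s) * (-4) * hyz'
  · linear_combination
      (-8 * (-(deriv (deriv B) s 0 * deriv (deriv B) s 0) + deriv (deriv B) s 1 * deriv (deriv B) s 1 + deriv (deriv B) s 2 * deriv (deriv B) s 2) - b s ^ 2 / 2) * hxx'
      + (-2 * b s) * hxy' + (-4) * hxz'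
end

section
/- Let B : ℝ → ℝ³ be a twice differentiable curve with B(s) ≠ 0, η(B(s),B(s)) = 0, and B(s) × B′(s) = (1/2)·B(s) for all s ∈ ℝ. Let A : ℝ → ℝ³ be a map with η(A(s),A(s)) = 0 and η(A(s),B(s)) = 1 for all s, and define b : ℝ → ℝ by b(s) = −2·η(A(s),B′(s)). Then for all s ∈ ℝ: A(s) = −4·(2·η(B″(s),B″(s))·B(s) + B″(s)) − 2·b(s)·(B′(s) + (b(s)/4)·B(s)). -/
/-- Pointwise algebra: `η(B',B') = 1/4`. -/
lemma aux_evv (u0 u1 u2 v0 v1 v2 : ℝ)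
    (hne : ¬(u0 = 0 ∧ u1 = 0 ∧ u2 = 0))
    (P : -(u0*v0) + u1*v1 + u2*v2 = 0)
    (C0 : -(u1*v2 - u2*v1) = 1/2 * u0)
    (C1 : u2*v0 - u0*v2 = 1/2 * u1)
    (C2 : u0*v1 - u1*v0 = 1/2 * u2) :
    -(v0*v0) + v1*v1 + v2*v2 = 1/4 := by
  have G0 : (-(v0*v0) + v1*v1 + v2*v2 - 1/4) * u0 = 0 := by
    linear_combination v0 * P + v1 * C2 - v2 * C1 + (1/2) * C0
  have G1 : (-(v0*v0) + v1*v1 + v2*v2 - 1/4) * u1 = 0 := by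
    linear_combination v1 * P - v2 * C0 + v0 * C2 + (1/2) * C1
  have G2 : (-(v0*v0) + v1*v1 + v2*v2 - 1/4) * u2 = 0 := by
    linear_combination v2 * P - v0 * C1 + v1 * C0 + (1/2) * C2
  by_contra hcon
  have hk : (-(v0*v0) + v1*v1 + v2*v2 - 1/4) ≠ 0 := fun h => hcon (by linarith)
  exact hne ⟨(mul_eq_zero.mp G0).resolve_left hk,
    (mul_eq_zero.mp G1).resolve_left hk, (mul_eq_zero.mp G2).resolve_left hk⟩

/-- Pointwise algebra: the coefficient computation. -/
lemma aux_main (u0 u1 u2 v0 v1 v2 w0 w1 w2 a0 a1 a2 bb : ℝ)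
    (N : -(u0*u0) + u1*u1 + u2*u2 = 0)
    (P : -(u0*v0) + u1*v1 + u2*v2 = 0)
    (EVV : -(v0*v0) + v1*v1 + v2*v2 = 1/4)
    (EUW : -(u0*w0) + u1*w1 + u2*w2 = -(1/4))
    (EVW : -(v0*w0) + v1*w1 + v2*w2 = 0)
    (C0 : -(u1*v2 - u2*v1) = 1/2 * u0)
    (C1 : u2*v0 - u0*v2 = 1/2 * u1)
    (C2 : u0*v1 - u1*v0 = 1/2 * u2)
    (EAU : -(a0*u0) + a1*u1 + a2*u2 = 1)
    (EAV : -(a0*v0) + a1*v1 + a2*v2 = -(bb/2))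
    (EAA : -(a0*a0) + a1*a1 + a2*a2 = 0) :
    (a0 = -8*(-(w0*w0)+w1*w1+w2*w2)*u0 - bb^2/2*u0 - 2*bb*v0 - 4*w0) ∧
    (a1 = -8*(-(w0*w0)+w1*w1+w2*w2)*u1 - bb^2/2*u1 - 2*bb*v1 - 4*w1) ∧
    (a2 = -8*(-(w0*w0)+w1*w1+w2*w2)*u2 - bb^2/2*u2 - 2*bb*v2 - 4*w2) := by
  have Hdet : -(-(u1*v2 - u2*v1) * w0) + (u2*v0 - u0*v2)*w1 + (u0*v1 - u1*v0)*w2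
      = -(1/8) := by
    linear_combination (-w0) * C0 + w1 * C1 + w2 * C2 + (1/2) * EUW
  set dA := -8*(-(-(a1*v2 - a2*v1) * w0) + (a2*v0 - a0*v2)*w1 + (a0*v1 - a1*v0)*w2) with hdA
  set dB := -8*(-(-(u1*a2 - u2*a1) * w0) + (u2*a0 - u0*a2)*w1 + (u0*a1 - u1*a0)*w2) with hdB
  set dC := -8*(-(-(u1*v2 - u2*v1) * a0) + (u2*v0 - u0*v2)*a1 + (u0*v1 - u1*v0)*a2) with hdC
  have E0 : a0 = dA*u0 + dB*v0 + dC*w0 := by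
    rw [hdA, hdB, hdC]; linear_combination (8*a0) * Hdet
  have E1 : a1 = dA*u1 + dB*v1 + dC*w1 := by
    rw [hdA, hdB, hdC]; linear_combination (8*a1) * Hdet
  have E2 : a2 = dA*u2 + dB*v2 + dC*w2 := by
    rw [hdA, hdB, hdC]; linear_combination (8*a2) * Hdet
  have PAu : -(a0*u0) + a1*u1 + a2*u2
      = dA*(-(u0*u0)+u1*u1+u2*u2) + dB*(-(u0*v0)+u1*v1+u2*v2)
        + dC*(-(u0*w0)+u1*w1+u2*w2) := by
    linear_combination (-u0) * E0 + u1 * E1 + u2 * E2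
  have PAv : -(a0*v0) + a1*v1 + a2*v2
      = dA*(-(u0*v0)+u1*v1+u2*v2) + dB*(-(v0*v0)+v1*v1+v2*v2)
        + dC*(-(v0*w0)+v1*w1+v2*w2) := by
    linear_combination (-v0) * E0 + v1 * E1 + v2 * E2
  have PAw : -(a0*w0) + a1*w1 + a2*w2
      = dA*(-(u0*w0)+u1*w1+u2*w2) + dB*(-(v0*w0)+v1*w1+v2*w2)
        + dC*(-(w0*w0)+w1*w1+w2*w2) := by
    linear_combination (-w0) * E0 + w1 * E1 + w2 * E2
  have PAA : -(a0*a0) + a1*a1 + a2*a2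
      = dA*(-(a0*u0)+a1*u1+a2*u2) + dB*(-(a0*v0)+a1*v1+a2*v2)
        + dC*(-(a0*w0)+a1*w1+a2*w2) := by
    linear_combination (-a0) * E0 + a1 * E1 + a2 * E2
  have hγ : dC = -4 := by
    linear_combination -4*EAU + 4*PAu + 4*dA*N + 4*dB*P + 4*dC*EUW
  have hβ : dB = -2*bb := by
    linear_combination -4*PAv + 4*EAV - 4*dA*P - 4*dC*EVW - 4*dB*EVV
  have hAw : -(a0*w0) + a1*w1 + a2*w2 = -(dA/4) - 4*(-(w0*w0)+w1*w1+w2*w2) := by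
    linear_combination PAw + dA*EUW + dB*EVW + (-(w0*w0)+w1*w1+w2*w2)*hγ
  have hα : dA = -(bb^2/2) - 8*(-(w0*w0)+w1*w1+w2*w2) := by
    linear_combination (-1/2)*PAA + (1/2)*EAA - (dA/2)*EAU - (dB/2)*EAV - (dC/2)*hAw
      + (dA/8 + 2*(-(w0*w0)+w1*w1+w2*w2))*hγ + (bb/4)*hβ
  refine ⟨?_, ?_, ?_⟩
  · linear_combination E0 + u0*hα + v0*hβ + w0*hγ
  · linear_combination E1 + u1*hα + v1*hβ + w1*hγ
  · linear_combination E2 + u2*hα + v2*hβ + w2*hγ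

/-- For a null curve `B` with `B × B′ = (1/2) B`, every null vector field `A` with
`η(A, B) = 1` is of the form `A = −4(2η(B″,B″)B + B″) − 2b(B′ + (b/4)B)`,
where `b = −2η(A, B′)`. -/
theorem velocity_formula_of_null (B : ℝ → Fin 3 → ℝ)
    (hB : Differentiable ℝ B) (hB' : Differentiable ℝ (deriv B))
    (hBne : ∀ s, B s ≠ 0) (hBnull : ∀ s, eta (B s) (B s) = 0)
    (hcross : ∀ s, lcross (B s) (deriv B s) = (1 / 2 : ℝ) • B s)
    (A : ℝ → Fin 3 → ℝ)
    (hAnull : ∀ s, eta (A s) (A s) = 0)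
    (hAB : ∀ s, eta (A s) (B s) = 1)
    (b : ℝ → ℝ) (hb : ∀ s, b s = -2 * eta (A s) (deriv B s)) :
    ∀ s, A s =
      (-4 : ℝ) • ((2 * eta (deriv (deriv B) s) (deriv (deriv B) s)) • B s
          + deriv (deriv B) s)
        - (2 * b s) • (deriv B s + (b s / 4) • B s) := by
  have Hc : ∀ t i, HasDerivAt (fun r => B r i) (deriv B t i) t :=
    fun t i => hasDerivAt_pi.mp (hB t).hasDerivAt i
  have Hc' : ∀ t i, HasDerivAt (fun r => deriv B r i) (deriv (deriv B) t i) t :=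
    fun t i => hasDerivAt_pi.mp (hB' t).hasDerivAt i
  -- cross product component equations
  have hc0 : ∀ t, -(B t 1 * deriv B t 2 - B t 2 * deriv B t 1) = 1/2 * B t 0 := by
    intro t
    have h := congrFun (hcross t) 0
    simp only [lcross, Matrix.cons_val_zero, Pi.smul_apply, smul_eq_mul] at h
    linear_combination h
  have hc1 : ∀ t, B t 2 * deriv B t 0 - B t 0 * deriv B t 2 = 1/2 * B t 1 := by
    intro t
    have h := congrFun (hcross t) 1
    simp only [lcross, Matrix.cons_val_one, Matrix.head_cons, Pi.smul_apply,
      smul_eq_mul, Matrix.cons_val_zero] at h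
    linear_combination h
  have hc2 : ∀ t, B t 0 * deriv B t 1 - B t 1 * deriv B t 0 = 1/2 * B t 2 := by
    intro t
    have h := congrFun (hcross t) 2
    simp only [lcross, Matrix.cons_val_two, Matrix.tail_cons, Matrix.head_cons,
      Pi.smul_apply, smul_eq_mul] at h
    linear_combination h
  -- η(B,B') = 0
  have Puv : ∀ t, -(B t 0 * deriv B t 0) + B t 1 * deriv B t 1 + B t 2 * deriv B t 2
      = 0 := by
    intro t
    have h : HasDerivAt (fun r => -(B r 0 * B r 0) + B r 1 * B r 1 + B r 2 * B r 2)
        (-(deriv B t 0 * B t 0 + B t 0 * deriv B t 0)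
          + (deriv B t 1 * B t 1 + B t 1 * deriv B t 1)
          + (deriv B t 2 * B t 2 + B t 2 * deriv B t 2)) t :=
      (((Hc t 0).mul (Hc t 0)).neg.add ((Hc t 1).mul (Hc t 1))).add
        ((Hc t 2).mul (Hc t 2))
    have h0 : (fun r => -(B r 0 * B r 0) + B r 1 * B r 1 + B r 2 * B r 2)
        = fun _ => (0:ℝ) := funext fun r => by simpa [eta] using hBnull r
    rw [h0] at h
    have hz := h.unique (hasDerivAt_const t 0)
    linear_combination hz / 2
  -- derivative of the cross relation : lcross B B'' = (1/2) B' componentwise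
  have Dr0 : ∀ t, -(B t 1 * deriv (deriv B) t 2 - B t 2 * deriv (deriv B) t 1)
      = 1/2 * deriv B t 0 := by
    intro t
    have h : HasDerivAt (fun r => -(B r 1 * deriv B r 2 - B r 2 * deriv B r 1))
        (-((deriv B t 1 * deriv B t 2 + B t 1 * deriv (deriv B) t 2)
          - (deriv B t 2 * deriv B t 1 + B t 2 * deriv (deriv B) t 1))) t :=
      (((Hc t 1).mul (Hc' t 2)).sub ((Hc t 2).mul (Hc' t 1))).neg
    have h0 : (fun r => -(B r 1 * deriv B r 2 - B r 2 * deriv B r 1))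
        = fun r => 1/2 * B r 0 := funext fun r => hc0 r
    rw [h0] at h
    have hz := h.unique ((Hc t 0).const_mul (1/2 : ℝ))
    linear_combination hz
  have Dr1 : ∀ t, B t 2 * deriv (deriv B) t 0 - B t 0 * deriv (deriv B) t 2
      = 1/2 * deriv B t 1 := by
    intro t
    have h : HasDerivAt (fun r => B r 2 * deriv B r 0 - B r 0 * deriv B r 2)
        ((deriv B t 2 * deriv B t 0 + B t 2 * deriv (deriv B) t 0)
          - (deriv B t 0 * deriv B t 2 + B t 0 * deriv (deriv B) t 2)) t :=
      ((Hc t 2).mul (Hc' t 0)).sub ((Hc t 0).mul (Hc' t 2))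
    have h0 : (fun r => B r 2 * deriv B r 0 - B r 0 * deriv B r 2)
        = fun r => 1/2 * B r 1 := funext fun r => hc1 r
    rw [h0] at h
    have hz := h.unique ((Hc t 1).const_mul (1/2 : ℝ))
    linear_combination hz
  have Dr2 : ∀ t, B t 0 * deriv (deriv B) t 1 - B t 1 * deriv (deriv B) t 0
      = 1/2 * deriv B t 2 := by
    intro t
    have h : HasDerivAt (fun r => B r 0 * deriv B r 1 - B r 1 * deriv B r 0)
        ((deriv B t 0 * deriv B t 1 + B t 0 * deriv (deriv B) t 1)
          - (deriv B t 1 * deriv B t 0 + B t 1 * deriv (deriv B) t 0)) t :=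
      ((Hc t 0).mul (Hc' t 1)).sub ((Hc t 1).mul (Hc' t 0))
    have h0 : (fun r => B r 0 * deriv B r 1 - B r 1 * deriv B r 0)
        = fun r => 1/2 * B r 2 := funext fun r => hc2 r
    rw [h0] at h
    have hz := h.unique ((Hc t 2).const_mul (1/2 : ℝ))
    linear_combination hz
  -- η(B',B') = 1/4
  have Evv : ∀ t, -(deriv B t 0 * deriv B t 0) + deriv B t 1 * deriv B t 1
      + deriv B t 2 * deriv B t 2 = 1/4 := by
    intro t
    refine aux_evv _ _ _ _ _ _ ?_ (Puv t) (hc0 t) (hc1 t) (hc2 t)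
    rintro ⟨h0, h1, h2⟩
    apply hBne t
    funext i
    fin_cases i <;> simpa using ‹_›
  -- η(B,B'') = -1/4
  have Euw : ∀ t, -(B t 0 * deriv (deriv B) t 0) + B t 1 * deriv (deriv B) t 1
      + B t 2 * deriv (deriv B) t 2 = -(1/4) := by
    intro t
    have h : HasDerivAt
        (fun r => -(B r 0 * deriv B r 0) + B r 1 * deriv B r 1 + B r 2 * deriv B r 2)
        (-(deriv B t 0 * deriv B t 0 + B t 0 * deriv (deriv B) t 0)
          + (deriv B t 1 * deriv B t 1 + B t 1 * deriv (deriv B) t 1)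
          + (deriv B t 2 * deriv B t 2 + B t 2 * deriv (deriv B) t 2)) t :=
      (((Hc t 0).mul (Hc' t 0)).neg.add ((Hc t 1).mul (Hc' t 1))).add
        ((Hc t 2).mul (Hc' t 2))
    have h0 : (fun r => -(B r 0 * deriv B r 0) + B r 1 * deriv B r 1
        + B r 2 * deriv B r 2) = fun _ => (0:ℝ) := funext fun r => Puv r
    rw [h0] at h
    have hz := h.unique (hasDerivAt_const t 0)
    linear_combination hz - Evv t
  -- η(B',B'') = 0
  have Evw : ∀ t, -(deriv B t 0 * deriv (deriv B) t 0)
      + deriv B t 1 * deriv (deriv B) t 1 + deriv B t 2 * deriv (deriv B) t 2 = 0 := by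
    intro t
    have h : HasDerivAt
        (fun r => -(deriv B r 0 * deriv B r 0) + deriv B r 1 * deriv B r 1
          + deriv B r 2 * deriv B r 2)
        (-(deriv (deriv B) t 0 * deriv B t 0 + deriv B t 0 * deriv (deriv B) t 0)
          + (deriv (deriv B) t 1 * deriv B t 1 + deriv B t 1 * deriv (deriv B) t 1)
          + (deriv (deriv B) t 2 * deriv B t 2 + deriv B t 2 * deriv (deriv B) t 2)) t :=
      (((Hc' t 0).mul (Hc' t 0)).neg.add ((Hc' t 1).mul (Hc' t 1))).add
        ((Hc' t 2).mul (Hc' t 2))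
    have h0 : (fun r => -(deriv B r 0 * deriv B r 0) + deriv B r 1 * deriv B r 1
        + deriv B r 2 * deriv B r 2) = fun _ => (1/4:ℝ) := funext fun r => Evv r
    rw [h0] at h
    have hz := h.unique (hasDerivAt_const t (1/4))
    linear_combination hz / 2
  intro s
  have EAU : -(A s 0 * B s 0) + A s 1 * B s 1 + A s 2 * B s 2 = 1 := by
    simpa [eta] using hAB s
  have EAV : -(A s 0 * deriv B s 0) + A s 1 * deriv B s 1 + A s 2 * deriv B s 2
      = -(b s / 2) := by
    have h := hb s
    simp only [eta] at h
    linarith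
  have EAA : -(A s 0 * A s 0) + A s 1 * A s 1 + A s 2 * A s 2 = 0 := by
    simpa [eta] using hAnull s
  have N : -(B s 0 * B s 0) + B s 1 * B s 1 + B s 2 * B s 2 = 0 := by
    simpa [eta] using hBnull s
  obtain ⟨F0, F1, F2⟩ := aux_main (B s 0) (B s 1) (B s 2) (deriv B s 0) (deriv B s 1)
    (deriv B s 2) (deriv (deriv B) s 0) (deriv (deriv B) s 1) (deriv (deriv B) s 2)
    (A s 0) (A s 1) (A s 2) (b s) N (Puv s) (Evv s) (Euw s) (Evw s)
    (hc0 s) (hc1 s) (hc2 s) EAU EAV EAA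
  funext i
  simp only [Pi.sub_apply, Pi.smul_apply, Pi.add_apply, smul_eq_mul, eta]
  fin_cases i
  · simpa using (by linear_combination F0 :
      A s 0 = (-4:ℝ) * ((2 * (-(deriv (deriv B) s 0 * deriv (deriv B) s 0)
        + deriv (deriv B) s 1 * deriv (deriv B) s 1
        + deriv (deriv B) s 2 * deriv (deriv B) s 2)) * B s 0 + deriv (deriv B) s 0)
        - 2 * b s * (deriv B s 0 + b s / 4 * B s 0))
  · simpa using (by linear_combination F1 :
      A s 1 = (-4:ℝ) * ((2 * (-(deriv (deriv B) s 0 * deriv (deriv B) s 0)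
        + deriv (deriv B) s 1 * deriv (deriv B) s 1
        + deriv (deriv B) s 2 * deriv (deriv B) s 2)) * B s 1 + deriv (deriv B) s 1)
        - 2 * b s * (deriv B s 1 + b s / 4 * B s 1))
  · simpa using (by linear_combination F2 :
      A s 2 = (-4:ℝ) * ((2 * (-(deriv (deriv B) s 0 * deriv (deriv B) s 0)
        + deriv (deriv B) s 1 * deriv (deriv B) s 1
        + deriv (deriv B) s 2 * deriv (deriv B) s 2)) * B s 2 + deriv (deriv B) s 2)
        - 2 * b s * (deriv B s 2 + b s / 4 * B s 2))
end

section
/- Let B : ℝ → ℝ³ be a twice differentiable curve with B(s) ≠ 0, η(B(s),B(s)) = 0, and B(s) × B′(s) = (1/2)·B(s) for all s ∈ ℝ. Then for every s ∈ ℝ and every b ∈ ℝ: η(B′(s),B′(s)) = 1/4, η(2B′(s) + b·B(s), 2B′(s) + b·B(s)) = 1, η(B(s), 2B′(s) + b·B(s)) = 0, η(b·B′(s) + 2B″(s), 2B′(s) + b·B(s)) = 0, and the vectors B(s) and b·B′(s) + 2B″(s) are linearly independent. -/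
private lemma eta_hasDerivAt (u v : ℝ → Fin 3 → ℝ) (hu : Differentiable ℝ u)
    (hv : Differentiable ℝ v) (s : ℝ) :
    HasDerivAt (fun t => eta (u t) (v t))
      (eta (deriv u s) (v s) + eta (u s) (deriv v s)) s := by
  have hui : ∀ i, HasDerivAt (fun t => u t i) (deriv u s i) s :=
    hasDerivAt_pi.mp (hu s).hasDerivAt
  have hvi : ∀ i, HasDerivAt (fun t => v t i) (deriv v s i) s :=
    hasDerivAt_pi.mp (hv s).hasDerivAt
  have h := (((hui 0).mul (hvi 0)).neg.add ((hui 1).mul (hvi 1))).add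
    ((hui 2).mul (hvi 2))
  refine (h.congr_deriv ?_).congr_of_eventuallyEq (Filter.Eventually.of_forall fun _ => rfl)
  simp only [eta]
  ring

/-- Algebraic identities for a null curve `B` with `B × B′ = (1/2) B`. -/
theorem ruling_identities (B : ℝ → Fin 3 → ℝ)
    (hB : Differentiable ℝ B) (hB' : Differentiable ℝ (deriv B))
    (hBne : ∀ s, B s ≠ 0) (hBnull : ∀ s, eta (B s) (B s) = 0)
    (hcross : ∀ s, lcross (B s) (deriv B s) = (1 / 2 : ℝ) • B s) :
    ∀ (s : ℝ) (b : ℝ),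
      eta (deriv B s) (deriv B s) = 1 / 4 ∧
      eta ((2 : ℝ) • deriv B s + b • B s) ((2 : ℝ) • deriv B s + b • B s) = 1 ∧
      eta (B s) ((2 : ℝ) • deriv B s + b • B s) = 0 ∧
      eta (b • deriv B s + (2 : ℝ) • deriv (deriv B) s)
        ((2 : ℝ) • deriv B s + b • B s) = 0 ∧
      LinearIndependent ℝ ![B s, b • deriv B s + (2 : ℝ) • deriv (deriv B) s] := by
  have hc0 : ∀ s, -(B s 1 * deriv B s 2 - B s 2 * deriv B s 1) = 1/2 * B s 0 := by
    intro s; have := congrFun (hcross s) 0; simpa [lcross] using this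
  have hc1 : ∀ s, B s 2 * deriv B s 0 - B s 0 * deriv B s 2 = 1/2 * B s 1 := by
    intro s; have := congrFun (hcross s) 1; simpa [lcross] using this
  have hc2 : ∀ s, B s 0 * deriv B s 1 - B s 1 * deriv B s 0 = 1/2 * B s 2 := by
    intro s; have := congrFun (hcross s) 2; simpa [lcross] using this
  -- eta (B s) (deriv B s) = 0
  have hxy : ∀ s, eta (B s) (deriv B s) = 0 := by
    intro s
    have h0 := hc0 s; have h1 := hc1 s; have h2 := hc2 s
    simp only [eta]
    linear_combination (2 * deriv B s 0) * h0 - (2 * deriv B s 1) * h1 -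
      (2 * deriv B s 2) * h2
  -- eta (deriv B s) (deriv B s) = 1/4
  have hyy : ∀ s, eta (deriv B s) (deriv B s) = 1/4 := by
    intro s
    have h0 := hc0 s; have h1 := hc1 s; have h2 := hc2 s
    have hxy' := hxy s
    simp only [eta] at hxy' ⊢
    have E0 : (-(deriv B s 0 * deriv B s 0) + deriv B s 1 * deriv B s 1 +
        deriv B s 2 * deriv B s 2 - 1/4) * B s 0 = 0 := by
      linear_combination ((1:ℝ)/2) * h0 - (deriv B s 2) * h1 +
        (deriv B s 1) * h2 + (deriv B s 0) * hxy'
    have E1 : (-(deriv B s 0 * deriv B s 0) + deriv B s 1 * deriv B s 1 +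
        deriv B s 2 * deriv B s 2 - 1/4) * B s 1 = 0 := by
      linear_combination (-(deriv B s 2)) * h0 + ((1:ℝ)/2) * h1 +
        (deriv B s 0) * h2 + (deriv B s 1) * hxy'
    have E2 : (-(deriv B s 0 * deriv B s 0) + deriv B s 1 * deriv B s 1 +
        deriv B s 2 * deriv B s 2 - 1/4) * B s 2 = 0 := by
      linear_combination (deriv B s 1) * h0 - (deriv B s 0) * h1 +
        ((1:ℝ)/2) * h2 + (deriv B s 2) * hxy'
    obtain ⟨i, hi⟩ := Function.ne_iff.mp (hBne s)
    have hi' : B s i ≠ 0 := by simpa using hi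
    fin_cases i
    · rcases mul_eq_zero.mp E0 with h | h
      · linarith
      · exact absurd h hi'
    · rcases mul_eq_zero.mp E1 with h | h
      · linarith
      · exact absurd h hi'
    · rcases mul_eq_zero.mp E2 with h | h
      · linarith
      · exact absurd h hi'
  intro s b
  have hxz : ∀ s, eta (B s) (deriv (deriv B) s) = -(1/4) := by
    intro s
    have hd := eta_hasDerivAt B (deriv B) hB hB' s
    have hzero : (fun t => eta (B t) (deriv B t)) = fun _ => (0:ℝ) := funext hxy
    have hd0 : HasDerivAt (fun t => eta (B t) (deriv B t)) 0 s := by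
      rw [hzero]; exact hasDerivAt_const s 0
    have h := hd.unique hd0
    have h2 := hyy s
    simp only [eta] at h h2 ⊢
    linarith
  have hyz : ∀ s, eta (deriv B s) (deriv (deriv B) s) = 0 := by
    intro s
    have hd := eta_hasDerivAt (deriv B) (deriv B) hB' hB' s
    have hzero : (fun t => eta (deriv B t) (deriv B t)) = fun _ => (1/4:ℝ) :=
      funext hyy
    have hd0 : HasDerivAt (fun t => eta (deriv B t) (deriv B t)) 0 s := by
      rw [hzero]; exact hasDerivAt_const s _
    have h := hd.unique hd0
    simp only [eta] at h ⊢
    linarith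
  have hxx := hBnull s
  have hxy' := hxy s
  have hyy' := hyy s
  have hxz' := hxz s
  have hyz' := hyz s
  simp only [eta] at hxx hxy' hyy' hxz' hyz'
  -- eta (B s) (b • deriv B s + 2 • deriv (deriv B) s) = -1/2
  have hval : eta (B s) (b • deriv B s + (2:ℝ) • deriv (deriv B) s) = -(1/2) := by
    simp only [eta, Pi.add_apply, Pi.smul_apply, smul_eq_mul]
    linear_combination b * hxy' + 2 * hxz'
  refine ⟨?_, ?_, ?_, ?_, ?_⟩
  · simp only [eta]; linarith
  · simp only [eta, Pi.add_apply, Pi.smul_apply, smul_eq_mul]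
    linear_combination 4 * hyy' + 4 * b * hxy' + b^2 * hxx
  · simp only [eta, Pi.add_apply, Pi.smul_apply, smul_eq_mul]
    linear_combination 2 * hxy' + b * hxx
  · simp only [eta, Pi.add_apply, Pi.smul_apply, smul_eq_mul]
    linear_combination 2 * b * hyy' + b^2 * hxy' + 4 * hyz' + 2 * b * hxz'
  · rw [linearIndependent_fin2]
    constructor
    · simp only [Matrix.cons_val_one, Matrix.head_cons, Matrix.cons_val_zero]
      intro h
      rw [h] at hval
      simp [eta] at hval
    · simp only [Matrix.cons_val_one, Matrix.head_cons, Matrix.cons_val_zero]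
      intro a h
      have he : eta (B s) (a • (b • deriv B s + (2:ℝ) • deriv (deriv B) s)) =
          eta (B s) (B s) := by rw [h]
      have hsc : eta (B s) (a • (b • deriv B s + (2:ℝ) • deriv (deriv B) s)) =
          a * eta (B s) (b • deriv B s + (2:ℝ) • deriv (deriv B) s) := by
        simp only [eta, Pi.add_apply, Pi.smul_apply, smul_eq_mul]; ring
      rw [hsc, hval] at he
      have ha : a = 0 := by
        have hx0 : eta (B s) (B s) = 0 := hBnull s
        rw [hx0] at he
        linarith
      rw [ha, zero_smul] at h
      exact hBne s h.symm
end

section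
/- Let B = (B¹,B²,−B³) : ℝ → ℝ³ be a differentiable curve with η(B(s),B(s)) = 0 and B(s) × B′(s) = (1/2)·B(s) for all s, set B̃ = (B¹,B²,B³), and let A = (A¹,A²,A³) : ℝ → ℝ³ satisfy η(A(s),A(s)) = 0 and η(A(s),B(s)) = 1 for all s. Then for all s ∈ ℝ and all t ∈ ℝ: η(A,B̃) + t·(A¹B² − A²B¹)·B³ + (t²/2)·(B²·(B¹)′ − B¹·(B²)′)·B³ = (A¹B² − A²B¹ + (t/2)·B³)², where all functions are evaluated at s. -/
/-- The coefficient `g₁₂` of a minimal null scroll is a perfect square.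
Here the curve is `B = (B¹, B², −B³)`, so `B³(s) = −B(s) 2`, and
`B̃ = (B¹, B², B³)`. -/
theorem g12_is_square (B : ℝ → Fin 3 → ℝ) (hB : Differentiable ℝ B)
    (hBnull : ∀ s, eta (B s) (B s) = 0)
    (hcross : ∀ s, lcross (B s) (deriv B s) = (1 / 2 : ℝ) • B s)
    (A : ℝ → Fin 3 → ℝ)
    (hAnull : ∀ s, eta (A s) (A s) = 0)
    (hAB : ∀ s, eta (A s) (B s) = 1) :
    ∀ (s t : ℝ),
      eta (A s) ![B s 0, B s 1, -(B s 2)]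
        + t * ((A s 0 * B s 1 - A s 1 * B s 0) * (-(B s 2)))
        + t ^ 2 / 2 * ((B s 1 * deriv B s 0 - B s 0 * deriv B s 1) * (-(B s 2)))
      = (A s 0 * B s 1 - A s 1 * B s 0 + t / 2 * (-(B s 2))) ^ 2 := by
  intro s t
  have h3 := congrFun (hcross s) 2
  simp [lcross, Pi.smul_apply] at h3
  have hA := hAnull s
  have hB2 := hBnull s
  have hE := hAB s
  simp only [eta, Matrix.cons_val_zero, Matrix.cons_val_one, Matrix.head_cons,
    Matrix.cons_val_two, Matrix.tail_cons] at hA hB2 hE ⊢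
  linear_combination (-(B s 2)^2) * hA + ((A s 1)^2 - (A s 0)^2) * hB2
    + (A s 0 * B s 0 - A s 1 * B s 1 + A s 2 * B s 2) * hE
    + (t^2 * B s 2 / 2) * h3
end

section
/- Let A = (A¹,A²,A³), B = (B¹,B²,B³), C = (C¹,C²,C³) be vectors in ℝ³ such that the triple (A,B,C) satisfies the null-frame pairing conditions. Then the determinant of the 3×3 matrix with rows (A¹, B¹, C¹), (A², B², C²), (A³, −B³, 0) is zero; equivalently, the vectors (A¹,A²,A³), (B¹,B²,−B³), and (C¹,C²,0) are linearly dependent. -/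
/-- For a null frame `(A, B, C)`, the matrix with rows `(A¹,B¹,C¹)`, `(A²,B²,C²)`,
`(A³,−B³,0)` is singular; equivalently `A`, `(B¹,B²,−B³)`, `(C¹,C²,0)` are
linearly dependent. -/
theorem horizontal_umbrella_planar (A B C : Fin 3 → ℝ)
    (hframe : NullFrame A B C) :
    Matrix.det !![A 0, B 0, C 0; A 1, B 1, C 1; A 2, -(B 2), 0] = 0 ∧
    ¬ LinearIndependent ℝ ![A, ![B 0, B 1, -(B 2)], ![C 0, C 1, 0]] := by
  obtain ⟨h1, h2, hA, hB, h5, h6⟩ := hframe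
  simp only [eta] at h1 h2 hA hB h5 h6
  set R : ℝ := A 2 * B 0 - A 0 * B 2 with hR
  set S : ℝ := A 1 * B 2 - A 2 * B 1 with hS
  set W : ℝ := A 0 * B 1 - A 1 * B 0 with hW
  set D : ℝ := C 1 * (A 0 * B 2 + A 2 * B 0) - C 0 * (A 1 * B 2 + A 2 * B 1) with hD
  have hRD : R * D = 0 := by
    linear_combination (-(A 1 * B 2 + A 2 * B 1)) * B 2 * h5 +
      (A 1 * B 2 + A 2 * B 1) * A 2 * h6 + C 1 * B 2 ^ 2 * hA - C 1 * A 2 ^ 2 * hB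
  have hSD : S * D = 0 := by
    linear_combination (A 0 * B 2 + A 2 * B 0) * B 2 * h5 -
      (A 0 * B 2 + A 2 * B 0) * A 2 * h6 - C 0 * B 2 ^ 2 * hA + C 0 * A 2 ^ 2 * hB
  have hWD : W * D = 0 := by
    linear_combination (-(A 0 * B 2 + A 2 * B 0)) * B 0 * h5 +
      (A 0 * B 2 + A 2 * B 0) * A 0 * h6 + (A 1 * B 2 + A 2 * B 1) * B 1 * h5 -
      (A 1 * B 2 + A 2 * B 1) * A 1 * h6 + C 2 * B 2 ^ 2 * hA - C 2 * A 2 ^ 2 * hB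
  have hnorm : R ^ 2 + W ^ 2 = 1 + S ^ 2 := by
    linear_combination (-(A 0 * B 0) + A 1 * B 1 + A 2 * B 2 + 1) * h1 -
      (-(B 0 * B 0) + B 1 * B 1 + B 2 * B 2) * hA
  have hpos : R ^ 2 + W ^ 2 > 0 := by nlinarith [sq_nonneg S]
  have hD0 : D = 0 := by
    have : (R ^ 2 + W ^ 2) * D = 0 := by
      calc (R ^ 2 + W ^ 2) * D = R * (R * D) + W * (W * D) := by ring
        _ = 0 := by rw [hRD, hWD]; ring
    exact (mul_eq_zero.mp this).resolve_left (ne_of_gt hpos)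
  have hdet : Matrix.det !![A 0, B 0, C 0; A 1, B 1, C 1; A 2, -(B 2), 0] = 0 := by
    simp [Matrix.det_fin_three]
    linear_combination hD0
  refine ⟨hdet, fun hli => ?_⟩
  have : IsUnit (Matrix.of ![A, ![B 0, B 1, -(B 2)], ![C 0, C 1, 0]]) := by
    rw [← Matrix.linearIndependent_rows_iff_isUnit]
    exact hli
  have hdet' : (Matrix.of ![A, ![B 0, B 1, -(B 2)], ![C 0, C 1, 0]]).det ≠ 0 :=
    (Matrix.isUnit_iff_isUnit_det _).mp this |>.ne_zero
  apply hdet'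
  simp [Matrix.det_fin_three]
  linear_combination hD0
end

section
/- Let p, q : ℝ → ℝ be twice differentiable functions such that p(x) + q(y) ≠ 0 and p′(x)·q′(y) < 0 for all x, y ∈ ℝ. Define w : ℝ² → ℝ by w(x,y) = log(−p′(x)·q′(y)/(p(x)+q(y))²). Then w satisfies the hyperbolic Liouville equation (1/2)·∂²w/∂x∂y + e^{w} = 0 at every point of ℝ². -/
/-- The exact solutions `w(x,y) = log(−p′(x)q′(y)/(p(x)+q(y))²)` of the hyperbolic
Liouville equation `(1/2) w_{xy} + e^w = 0`. -/
theorem liouville_exact_solution (p q : ℝ → ℝ)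
    (hp : Differentiable ℝ p) (hp' : Differentiable ℝ (deriv p))
    (hq : Differentiable ℝ q) (hq' : Differentiable ℝ (deriv q))
    (hne : ∀ x y, p x + q y ≠ 0)
    (hsign : ∀ x y, deriv p x * deriv q y < 0)
    (w : ℝ → ℝ → ℝ)
    (hw : ∀ x y, w x y = Real.log (-(deriv p x * deriv q y) / (p x + q y) ^ 2)) :
    ∀ x y, (1 / 2 : ℝ) * deriv (fun x' => deriv (fun y' => w x' y') y) x
      + Real.exp (w x y) = 0 := by
  have hp'ne : ∀ x, deriv p x ≠ 0 := fun x hx => by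
    have := hsign x 0; rw [hx] at this; simp at this
  have hq'ne : ∀ y, deriv q y ≠ 0 := fun y hy => by
    have := hsign 0 y; rw [hy] at this; simp at this
  -- inner derivative
  have hinner : ∀ x y, HasDerivAt (fun y' => w x y')
      (deriv (deriv q) y / deriv q y - 2 * deriv q y / (p x + q y)) y := by
    intro x y
    have hfun : (fun y' => w x y') = fun y' =>
        Real.log (-(deriv p x * deriv q y')) - Real.log ((p x + q y') ^ 2) := by
      funext y'
      rw [hw x y', Real.log_div (by simpa using mul_ne_zero (hp'ne x) (hq'ne y'))
        (pow_ne_zero 2 (hne x y'))]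
    rw [hfun]
    have h1 : HasDerivAt (fun y' => -(deriv p x * deriv q y'))
        (-(deriv p x * deriv (deriv q) y)) y :=
      (((hq' y).hasDerivAt).const_mul (deriv p x)).neg
    have h2 : HasDerivAt (fun y' => (p x + q y') ^ 2)
        ((2 : ℕ) * (p x + q y) ^ 1 * deriv q y) y :=
      (((hq y).hasDerivAt).const_add (p x)).pow 2
    have hA : HasDerivAt (fun y' => Real.log (-(deriv p x * deriv q y')))
        (-(deriv p x * deriv (deriv q) y) / (-(deriv p x * deriv q y))) y :=
      h1.log (by simpa using mul_ne_zero (hp'ne x) (hq'ne y))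
    have hB : HasDerivAt (fun y' => Real.log ((p x + q y') ^ 2))
        (((2 : ℕ) * (p x + q y) ^ 1 * deriv q y) / (p x + q y) ^ 2) y :=
      h2.log (pow_ne_zero 2 (hne x y))
    have := hA.sub hB
    convert this using 1
    case e'_4 => rfl
    case e'_5 => rfl
    case e'_8 => rfl
    have h3 := hp'ne x; have h4 := hq'ne y; have h5 := hne x y
    rw [div_sub_div _ _ h4 h5, div_sub_div _ _ (neg_ne_zero.mpr (mul_ne_zero h3 h4)) (pow_ne_zero 2 h5),
      div_eq_div_iff (mul_ne_zero h4 h5) (mul_ne_zero (neg_ne_zero.mpr (mul_ne_zero h3 h4)) (pow_ne_zero 2 h5))]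
    push_cast
    ring
  intro x y
  have houter : (fun x' => deriv (fun y' => w x' y') y)
      = fun x' => deriv (deriv q) y / deriv q y - 2 * deriv q y / (p x' + q y) := by
    funext x'
    exact (hinner x' y).deriv
  have hdiv : HasDerivAt (fun x' => 2 * deriv q y / (p x' + q y))
      ((0 * (p x + q y) - 2 * deriv q y * deriv p x) / (p x + q y) ^ 2) x :=
    (hasDerivAt_const x (2 * deriv q y)).div (((hp x).hasDerivAt).add_const (q y)) (hne x y)
  have hO : HasDerivAt (fun x' => deriv (deriv q) y / deriv q y - 2 * deriv q y / (p x' + q y))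
      (0 - (0 * (p x + q y) - 2 * deriv q y * deriv p x) / (p x + q y) ^ 2) x :=
    (hasDerivAt_const x (deriv (deriv q) y / deriv q y)).sub hdiv
  rw [houter, hO.deriv, hw x y,
    Real.exp_log (by
      apply div_pos
      · linarith [hsign x y]
      · exact pow_two_pos_of_ne_zero (hne x y))]
  have h5 := hne x y
  field_simp
  ring
end
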